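/- Let g : ℕ → ℕ → ℕ be the ballot numbers defined by g(1,1) = 1, g(n,m) = 0 if n < m or m = 0, and g(n,m) = ∑_{k=1}^{m} g(n-1,k) for n ≥ 2, 1 ≤ m ≤ n. Then for all n ≥ 1, ∑_{m=1}^{n} g(n,m) = g(n+1,n+1) = Catalan(n), the n-th Catalan number (1/(n+1)) * C(2n, n). -/
import Mathlib


/-- The ballot numbers `g(n,m)` (OEIS A009766): `g(1,1) = 1`, `g(n,m) = 0` if
`n < m` or `m = 0`, and `g(n,m) = ∑_{k=1}^m g(n-1,k)` for `n ≥ 2`, `1 ≤ m ≤ n`. -/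
def gseq : ℕ → ℕ → ℕ
  | 0, _ => 0
  | 1, m => if m = 1 then 1 else 0
  | n+2, m =>
      if m = 0 ∨ n + 2 < m then 0
      else ∑ k ∈ Finset.Icc 1 m, gseq (n+1) k

lemma gseq_zero_of_lt : ∀ n m, n < m → gseq n m = 0
  | 0, _, _ => rfl
  | 1, m, h => by rw [gseq, if_neg (by omega)]
  | n+2, m, h => by rw [gseq, if_pos (Or.inr h)]

lemma gseq_one : ∀ n, 1 ≤ n → gseq n 1 = 1
  | 1, _ => rfl
  | n+2, _ => by
      rw [gseq, if_neg (by omega)]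
      simp [gseq_one (n+1) (by omega)]

lemma gseq_rec (n m : ℕ) (h1 : 1 ≤ m) (h2 : m + 1 ≤ n + 2) :
    gseq (n+2) (m+1) = gseq (n+2) m + gseq (n+1) (m+1) := by
  rw [gseq, if_neg (by omega), gseq, if_neg (by omega),
    Finset.sum_Icc_succ_top (by omega)]

lemma gseq_closed : ∀ a b, b ≤ a →
    gseq (a+1) (b+1) + Nat.choose (a+b) (a+1) = Nat.choose (a+b) b := by
  intro a
  induction a with
  | zero => intro b hb; interval_cases b; simp [gseq]
  | succ a iha =>
    intro b
    induction b with
    | zero =>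
      intro _
      rw [gseq_one (a+2) (by omega)]
      rw [show (a+1+0 : ℕ) = a+1 from rfl, Nat.choose_eq_zero_of_lt (by omega)]
      simp
    | succ b ihb =>
      intro hb
      have hrec : gseq (a+2) (b+2) = gseq (a+2) (b+1) + gseq (a+1) (b+2) :=
        gseq_rec a (b+1) (by omega) (by omega)
      have hIH : gseq (a+2) (b+1) + (a+b+1).choose (a+2) = (a+b+1).choose b := by
        simpa [show a+1+b = a+b+1 from by omega] using ihb (by omega)
      have p1 : (a+b+2).choose (b+1) = (a+b+1).choose b + (a+b+1).choose (b+1) :=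
        Nat.choose_succ_succ _ _
      have p2 : (a+b+2).choose (a+2) = (a+b+1).choose (a+1) + (a+b+1).choose (a+2) :=
        Nat.choose_succ_succ _ _
      have goal' : gseq (a+2) (b+2) + (a+b+2).choose (a+2) = (a+b+2).choose (b+1) := by
        by_cases hba : b = a
        · subst hba
          have h0 : gseq (b+1) (b+2) = 0 := gseq_zero_of_lt _ _ (by omega)
          have hsym : (b+b+1).choose (b+1) = (b+b+1).choose b := by
            rw [show b+1 = (b+b+1)-b from by omega]
            exact Nat.choose_symm (by omega)
          omega
        · have hrow : gseq (a+1) (b+2) + (a+b+1).choose (a+1) = (a+b+1).choose (b+1) := by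
            simpa [show a+(b+1) = a+b+1 from by omega] using iha (b+1) (by omega)
          omega
      simpa [show a+1+(b+1) = a+b+2 from by omega] using goal'

theorem gseq_row_sum_catalan (n : ℕ) (hn : 1 ≤ n) :
    (∑ m ∈ Finset.Icc 1 n, gseq n m) = gseq (n + 1) (n + 1) ∧
    ((gseq (n + 1) (n + 1) : ℚ) = (1 / ((n : ℚ) + 1)) * (Nat.choose (2 * n) n : ℚ)) := by
  constructor
  · obtain ⟨k, rfl⟩ : ∃ k, n = k + 1 := ⟨n - 1, by omega⟩
    rw [show k+1+1 = k+2 from rfl, gseq, if_neg (by omega)]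
    conv_rhs => rw [Finset.sum_Icc_succ_top (by omega)]
    rw [gseq_zero_of_lt (k+1) (k+2) (by omega), add_zero]
  · have key := gseq_closed n n le_rfl
    rw [show n + n = 2*n from by omega] at key
    have h2 := Nat.choose_succ_right_eq (2*n) n
    rw [show 2*n - n = n from by omega] at h2
    have hkeyQ : ((gseq (n+1) (n+1) : ℕ) : ℚ) + ((2*n).choose (n+1) : ℚ)
        = ((2*n).choose n : ℚ) := by exact_mod_cast key
    have h2Q : ((2*n).choose (n+1) : ℚ) * ((n : ℚ) + 1)
        = ((2*n).choose n : ℚ) * (n : ℚ) := by exact_mod_cast h2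
    have hne : ((n : ℚ) + 1) ≠ 0 := by positivity
    field_simp
    linear_combination ((n : ℚ) + 1) * hkeyQ - h2Q
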